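/- arXiv:1609.00168 — 3 statements merged into one kernel-verified Lean document; each statement's English description precedes it below -/
import Mathlib

section
/- Let d ≥ 2 and 1 ≤ k ≤ d-1 be integers, and let 0 = ℓ₀ < ℓ₁ < ⋯ < ℓ_k ≤ d be integers with ℓ_{k+1} := d+1. Then for every r with 1 ≤ r ≤ k, Σ_{t=r}^{k} ( (d+1)(d - ℓ_t + t)/(d(k+1)) - ℓ_{t+1} + ℓ_t ) < 0. -/
/-!
As ℓ strictly increases through the integers, ℓ t - t is nondecreasing, so each of the
k - r + 1 terms d - ℓ t + t is at most d - ℓ r + r, while the differences ℓ (t + 1) - ℓ t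
telescope to d + 1 - ℓ r. Clearing denominators, what is left is a polynomial inequality whose
defect is (d - k + r - ℓ r)(d r - k + r - 1) + (k - r + 1)(d - k) > 0 because ℓ r ≤ d - k + r.
-/

open Finset

theorem StrictMonoOn.monotoneOn_sub_self {ℓ : ℕ → ℤ} {s : Set ℕ} (hs : s.OrdConnected)
    (hℓ : StrictMonoOn ℓ s) : MonotoneOn (fun n => ℓ n - n) s :=
  monotoneOn_of_le_add_one hs fun n _ hn hn1 => by
    have := hℓ hn hn1 (Nat.lt_succ_self n)
    push_cast
    omega

theorem sum_Icc_sub_add_le {ℓ : ℕ → ℤ} {r k : ℕ} (hrk : r ≤ k) (D : ℚ)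
    (hℓ : MonotoneOn (fun n => ℓ n - n) (Set.Icc r k)) :
    ∑ t ∈ Icc r k, (D - ℓ t + t) ≤ (k - r + 1) * (D - ℓ r + r) := by
  calc ∑ t ∈ Icc r k, (D - ℓ t + t)
      ≤ #(Icc r k) • (D - ℓ r + r) := sum_le_card_nsmul _ _ _ fun t ht => by
        obtain ⟨hrt, htk⟩ := mem_Icc.1 ht
        have hℓt : ((ℓ r - r : ℤ) : ℚ) ≤ ((ℓ t - t : ℤ) : ℚ) :=
          Int.cast_le.2 (hℓ (Set.left_mem_Icc.2 hrk) ⟨hrt, htk⟩ hrt)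
        push_cast at hℓt
        linarith
    _ = (k - r + 1) * (D - ℓ r + r) := by
        rw [Nat.card_Icc, nsmul_eq_mul, Nat.cast_sub (by omega)]
        push_cast
        ring

theorem add_one_div_mul_lt_add_one_sub {K : Type*} [Field K] [LinearOrder K]
    [IsStrictOrderedRing K] {d k r L : K} (hr : 1 ≤ r) (hrk : r ≤ k) (hkd : k < d)
    (hL : L ≤ d - k + r) :
    (d + 1) / (d * (k + 1)) * ((k - r + 1) * (d - L + r)) < d + 1 - L := by
  have hgap : d * (k + 1) * (d + 1 - L) - (d + 1) * ((k - r + 1) * (d - L + r))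
      = (d - k + r - L) * (d * r - k + r - 1) + (k - r + 1) * (d - k) := by ring
  have hdr : d - k ≤ d * r - k := by nlinarith
  rw [div_mul_eq_mul_div, div_lt_iff₀ (by nlinarith)]
  nlinarith [mul_nonneg (sub_nonneg.2 hL) (by linarith : (0 : K) ≤ d * r - k + r - 1),
    mul_pos (by linarith : (0 : K) < k - r + 1) (sub_pos.2 hkd)]

theorem stmt_1_general (d k r : ℕ) (hk2 : k ≤ d - 1)
    (hr1 : 1 ≤ r) (hrk : r ≤ k)
    (ℓ : ℕ → ℤ)
    (hmono : ∀ i j : ℕ, i < j → j ≤ k → ℓ i < ℓ j)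
    (hled : ℓ k ≤ (d : ℤ)) (htop : ℓ (k + 1) = (d : ℤ) + 1) :
    ∑ t ∈ Finset.Icc r k,
        (((d : ℚ) + 1) * ((d : ℚ) - (ℓ t : ℚ) + (t : ℚ)) / ((d : ℚ) * ((k : ℚ) + 1))
          - (ℓ (t + 1) : ℚ) + (ℓ t : ℚ)) < 0 := by
  have hkd : k < d := by omega
  have hℓ : MonotoneOn (fun n => ℓ n - n) (Set.Iic k) :=
    StrictMonoOn.monotoneOn_sub_self Set.ordConnected_Iic fun i _ j hj hij => hmono i j hij hj
  have hℓr : (ℓ r : ℚ) ≤ d - k + r := by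
    have : ℓ r - r ≤ ℓ k - k := hℓ (Set.mem_Iic.2 hrk) Set.self_mem_Iic hrk
    exact_mod_cast (by omega : ℓ r ≤ d - k + r)
  have htop' : (ℓ (k + 1) : ℚ) = d + 1 := by exact_mod_cast htop
  have hsplit : ∑ t ∈ Icc r k,
        (((d : ℚ) + 1) * ((d : ℚ) - (ℓ t : ℚ) + (t : ℚ)) / ((d : ℚ) * ((k : ℚ) + 1))
          - (ℓ (t + 1) : ℚ) + (ℓ t : ℚ))
      = (d + 1) / (d * (k + 1)) * ∑ t ∈ Icc r k, ((d : ℚ) - ℓ t + t) - (d + 1 - ℓ r) := by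
    rw [← htop', ← sum_Icc_sub hrk fun n => (ℓ n : ℚ), mul_sum, ← sum_sub_distrib]
    refine sum_congr rfl fun t _ => ?_
    ring
  have hsum := mul_le_mul_of_nonneg_left
    (sum_Icc_sub_add_le hrk d (hℓ.mono Set.Icc_subset_Iic_self))
    (by positivity : (0 : ℚ) ≤ (d + 1) / (d * (k + 1)))
  have hkey := add_one_div_mul_lt_add_one_sub (K := ℚ) (by exact_mod_cast hr1)
    (by exact_mod_cast hrk) (by exact_mod_cast hkd) hℓr
  rw [hsplit]
  linarith

theorem stmt_1 (d k r : ℕ) (hd : 2 ≤ d) (hk1 : 1 ≤ k) (hk2 : k ≤ d - 1)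
    (hr1 : 1 ≤ r) (hrk : r ≤ k)
    (ℓ : ℕ → ℤ) (h0 : ℓ 0 = 0)
    (hmono : ∀ i j : ℕ, i < j → j ≤ k → ℓ i < ℓ j)
    (hled : ℓ k ≤ (d : ℤ)) (htop : ℓ (k + 1) = (d : ℤ) + 1) :
    ∑ t ∈ Finset.Icc r k,
        (((d : ℚ) + 1) * ((d : ℚ) - (ℓ t : ℚ) + (t : ℚ)) / ((d : ℚ) * ((k : ℚ) + 1))
          - (ℓ (t + 1) : ℚ) + (ℓ t : ℚ)) < 0 :=
  stmt_1_general d k r hk2 hr1 hrk ℓ hmono hled htop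
end

section
/- Let d ≥ 2 and 1 ≤ k ≤ d-1 be integers, and let 0 = ℓ₀ < ℓ₁ < ⋯ < ℓ_k ≤ d be integers. Then for every r with 1 ≤ r ≤ k, the inequality (dk - 1)(ℓ_r - r) < dr(d-k) + (d+1) Σ_{t=r+1}^{k} (ℓ_t - t) holds. -/
/-!
Write `m t = ℓ t - t`. Strict monotonicity of the integers `ℓ t` makes `m` nondecreasing, and
`ℓ 0 = 0`, `ℓ k ≤ d` give `0 ≤ m r ≤ m k ≤ d - k`. Hence the sum on the right is at least
`(k - r) * m r`, and the claim reduces to `(d r - 1 - (k - r)) * m r < d r (d - k)`, which holds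
because `m r ≤ d - k`.
-/

open Finset

theorem StrictMonoOn.monotoneOn_sub_natCast {ℓ : ℕ → ℤ} {s : Set ℕ} (hs : s.OrdConnected)
    (hℓ : StrictMonoOn ℓ s) : MonotoneOn (fun t => ℓ t - t) s := by
  intro i hi j hj hij
  induction j, hij using Nat.le_induction with
  | base => exact le_rfl
  | succ n hin ih =>
    have hn : n ∈ s := hs.out hi hj ⟨hin, n.le_succ⟩
    have hstep : ℓ n < ℓ (n + 1) := hℓ hn hj n.lt_succ_self
    push_cast
    linarith [ih hn]

theorem MonotoneOn.sub_mul_le_sum_Icc_succ {f : ℕ → ℤ} {r k : ℕ} (hf : MonotoneOn f (Set.Icc r k))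
    (hrk : r ≤ k) : ((k : ℤ) - r) * f r ≤ ∑ t ∈ Icc (r + 1) k, f t := by
  have hcard : ((#(Icc (r + 1) k) : ℕ) : ℤ) = k - r := by
    rw [Nat.card_Icc]; omega
  rw [← hcard, ← nsmul_eq_mul]
  refine card_nsmul_le_sum _ _ _ fun t ht => ?_
  rw [mem_Icc] at ht
  exact hf ⟨le_rfl, hrk⟩ ⟨by omega, ht.2⟩ (by omega)

theorem mul_lt_of_mul_le_sum {d k r m S : ℤ} (hr : 1 ≤ r) (hrk : r ≤ k) (hkd : k < d)
    (hm : 0 ≤ m) (hmd : m ≤ d - k) (hS : (k - r) * m ≤ S) :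
    (d * k - 1) * m < d * r * (d - k) + (d + 1) * S := by
  have hdr : 0 ≤ d * r - 1 := by nlinarith
  calc (d * k - 1) * m = (d + 1) * ((k - r) * m) + (d * r - 1 - (k - r)) * m := by ring
    _ ≤ (d + 1) * S + (d * r - 1) * m := by
      nlinarith [mul_le_mul_of_nonneg_left hS (by linarith : (0 : ℤ) ≤ d + 1),
        mul_nonneg (sub_nonneg.2 hrk) hm]
    _ ≤ (d + 1) * S + (d * r - 1) * (d - k) := by gcongr
    _ < d * r * (d - k) + (d + 1) * S := by linarith

theorem stmt_2_general (d k r : ℕ) (hk2 : k ≤ d - 1)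
    (hr1 : 1 ≤ r) (hrk : r ≤ k)
    (ℓ : ℕ → ℤ) (h0 : ℓ 0 = 0)
    (hmono : ∀ i j : ℕ, i < j → j ≤ k → ℓ i < ℓ j)
    (hled : ℓ k ≤ (d : ℤ)) :
    ((d : ℤ) * (k : ℤ) - 1) * (ℓ r - (r : ℤ))
      < (d : ℤ) * (r : ℤ) * ((d : ℤ) - (k : ℤ))
        + ((d : ℤ) + 1) * ∑ t ∈ Finset.Icc (r + 1) k, (ℓ t - (t : ℤ)) := by
  have hℓ : StrictMonoOn ℓ (Set.Iic k) := fun i _ j hj hij => hmono i j hij hj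
  have hexcess := hℓ.monotoneOn_sub_natCast Set.ordConnected_Iic
  have hrk' : r ∈ Set.Iic k := hrk
  have hm0 : 0 ≤ ℓ r - r := by
    simpa [h0] using hexcess (Set.mem_Iic.2 k.zero_le) hrk' r.zero_le
  have hmk : ℓ r - r ≤ d - k := by
    linarith [hexcess hrk' (Set.mem_Iic.2 le_rfl) hrk]
  have hsum := (hexcess.mono fun t ht => Set.mem_Iic.2 ht.2).sub_mul_le_sum_Icc_succ hrk
  exact mul_lt_of_mul_le_sum (by exact_mod_cast hr1) (by exact_mod_cast hrk) (by omega)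
    hm0 hmk hsum

theorem stmt_2 (d k r : ℕ) (hd : 2 ≤ d) (hk1 : 1 ≤ k) (hk2 : k ≤ d - 1)
    (hr1 : 1 ≤ r) (hrk : r ≤ k)
    (ℓ : ℕ → ℤ) (h0 : ℓ 0 = 0)
    (hmono : ∀ i j : ℕ, i < j → j ≤ k → ℓ i < ℓ j)
    (hled : ℓ k ≤ (d : ℤ)) :
    ((d : ℤ) * (k : ℤ) - 1) * (ℓ r - (r : ℤ))
      < (d : ℤ) * (r : ℤ) * ((d : ℤ) - (k : ℤ))
        + ((d : ℤ) + 1) * ∑ t ∈ Finset.Icc (r + 1) k, (ℓ t - (t : ℤ)) :=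
  stmt_2_general d k r hk2 hr1 hrk ℓ h0 hmono hled
end

section
/- For integers d ≥ 2, 1 ≤ s ≤ k ≤ d-1 and any nonnegative reals e₀, …, e_d and any admissible sequence 0 = ℓ₀ < ℓ₁ < ⋯ < ℓ_s ≤ d, define U(s, ℓ) by replacing, in the product ∏_{j=0}^{s} ( e_{ℓ_j} ∏_{t=ℓ_j+1}^{ℓ_{j+1}-1} min(e_t, q^j) ), the factor min(e_t, q^j) by q^j for the d-k largest such indices t and by e_t for the remaining k-s indices t (where ℓ_{s+1}=d+1). Then there exists a strictly increasing sequence 0 = ℓ₀ < ℓ₁' < ⋯ < ℓ_{s+1}' ≤ d, obtained by inserting the number ℓ_{j₀}+1 where j₀ = min{ j : ℓ_{j+1} ≠ ℓ_j + 1 }, such that U(s, ℓ) · q^{d-k} = U(s+1, ℓ') for every s ≤ k-1. -/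
/-!
For strictly increasing `ℓ` with `ℓ 0 = 0`, `U(s, ℓ)` depends only on the set `I` of values
`ℓ 1, …, ℓ s`. Since `ℓ j = j` up to `j₀`, the inserted value `m = j₀ + 1` is the smallest
index of `[1, d] \ I`; as at least `d - k` indices lie above it, its factor is `e m`, which
becomes the factor `e (ℓ' (j₀ + 1))`. Removing `m` from `[1, d] \ I` does not change which of
the remaining indices are among the `d - k` largest, while each of them gains exactly one value
of `ℓ'` below it. Hence each of the `d - k` factors `q ^ j(t)` gains one factor `q`.
-/

open Finset in
/-- The majorant `U(s, ℓ)` from the paper: the product `∏_{j=0}^{s} e_{ℓ_j}` times, over all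
indices `t ∈ [1,d]` not of the form `ℓ_j` (the "min" indices), the factor `q^{j(t)}` (where
`j(t) = max{j : ℓ_j < t}`) if `t` is among the `d-k` largest such indices, and `e_t` otherwise. -/
noncomputable def Umaj (q : ℝ) (d k s : ℕ) (ℓ : ℕ → ℕ) (e : ℕ → ℝ) : ℝ :=
  (∏ j ∈ range (s + 1), e (ℓ j)) *
    ∏ t ∈ Icc 1 d \ (Icc 1 s).image ℓ,
      if ((Icc 1 d \ (Icc 1 s).image ℓ).filter (fun t' => t < t')).card < d - k then
        q ^ ((Icc 1 s).filter (fun j => ℓ j < t)).card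
      else e t

open Finset

theorem card_filter_card_filter_lt_lt {α : Type*} [LinearOrder α] (A : Finset α) {n : ℕ}
    (hn : n ≤ #A) : #{t ∈ A | #{u ∈ A | t < u} < n} = n := by
  set r : α → ℕ := fun t => #{u ∈ A | t < u}
  have hanti : StrictAntiOn r A := by
    intro a _ b hb hab
    refine card_lt_card ⟨fun x hx => ?_, fun hsub => ?_⟩
    · simp only [mem_filter] at hx ⊢
      exact ⟨hx.1, hab.trans hx.2⟩
    · simpa using hsub (mem_filter.2 ⟨hb, hab⟩)
  have himage : A.image r = range #A := by
    refine eq_of_subset_of_card_le (fun x hx => ?_) ?_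
    · obtain ⟨a, ha, rfl⟩ := mem_image.1 hx
      exact mem_range.2 (card_lt_card (filter_ssubset.2 ⟨a, ha, lt_irrefl a⟩))
    · rw [card_range, card_image_of_injOn hanti.injOn]
  have hrange : {x ∈ range #A | x < n} = range n := by
    ext x
    simp only [mem_filter, mem_range]
    omega
  change #{t ∈ A | r t < n} = n
  rw [← card_image_of_injOn (hanti.injOn.mono (filter_subset _ _)),
    ← filter_image (p := (· < n)), himage, hrange, card_range]

noncomputable def majorantOfSet (q : ℝ) (D : Finset ℕ) (r : ℕ) (I : Finset ℕ) (e : ℕ → ℝ) : ℝ :=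
  e 0 * (∏ x ∈ I, e x) *
    ∏ t ∈ D \ I, if #{u ∈ D \ I | t < u} < r then q ^ #{x ∈ I | x < t} else e t

theorem Umaj_eq_majorantOfSet {q : ℝ} {d k s : ℕ} {ℓ : ℕ → ℕ} (e : ℕ → ℝ) (h0 : ℓ 0 = 0)
    (hℓ : StrictMonoOn ℓ (Set.Iic s)) :
    Umaj q d k s ℓ e = majorantOfSet q (Icc 1 d) (d - k) ((Icc 1 s).image ℓ) e := by
  have hinj : Set.InjOn ℓ (Icc 1 s) :=
    hℓ.injOn.mono fun i hi => Set.mem_Iic.2 (mem_Icc.1 hi).2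
  have hrange : range (s + 1) = insert 0 (Icc 1 s) := by
    ext i
    simp only [mem_range, mem_insert, mem_Icc]
    omega
  unfold Umaj majorantOfSet
  rw [hrange, prod_insert (by simp), h0, prod_image hinj]
  congr 1
  refine prod_congr rfl fun t _ => ?_
  rw [filter_image, card_image_of_injOn (hinj.mono (filter_subset _ _))]

theorem majorantOfSet_insert_min {q : ℝ} {D I : Finset ℕ} {r m : ℕ} (e : ℕ → ℝ)
    (hm : m ∈ D \ I) (hmin : ∀ t ∈ D \ I, m ≤ t) (hr : r < #(D \ I)) :
    majorantOfSet q D r I e * q ^ r = majorantOfSet q D r (insert m I) e := by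
  set S := D \ I
  have hmI : m ∉ I := (mem_sdiff.1 hm).2
  have hlt : ∀ t ∈ S.erase m, m < t := fun t ht =>
    (hmin t (mem_of_mem_erase ht)).lt_of_ne (ne_of_mem_erase ht).symm
  have hcard : #(S.erase m) = #S - 1 := card_erase_of_mem hm
  have habove_m : {u ∈ S | m < u} = S.erase m := by
    ext u
    simp only [mem_filter, mem_erase]
    exact ⟨fun h => ⟨h.2.ne', h.1⟩, fun h => ⟨h.2, (hmin u h.2).lt_of_ne h.1.symm⟩⟩
  have habove : ∀ t ∈ S.erase m, {u ∈ S | t < u} = {u ∈ S.erase m | t < u} := by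
    intro t ht
    rw [filter_erase, erase_eq_of_notMem]
    exact fun h => (hlt t ht).not_gt (mem_filter.1 h).2
  have hbelow : ∀ t ∈ S.erase m, #{x ∈ insert m I | x < t} = #{x ∈ I | x < t} + 1 := by
    intro t ht
    rw [filter_insert, if_pos (hlt t ht), card_insert_of_notMem fun h => hmI (mem_filter.1 h).1]
  have hfactors : (∏ t ∈ S.erase m, if #{u ∈ S.erase m | t < u} < r then
        q ^ #{x ∈ insert m I | x < t} else e t) =
      q ^ r * ∏ t ∈ S.erase m, if #{u ∈ S | t < u} < r then q ^ #{x ∈ I | x < t} else e t := by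
    calc _ = ∏ t ∈ S.erase m, (if #{u ∈ S.erase m | t < u} < r then q else 1) *
          (if #{u ∈ S | t < u} < r then q ^ #{x ∈ I | x < t} else e t) := by
          refine prod_congr rfl fun t ht => ?_
          rw [habove t ht, hbelow t ht]
          split_ifs <;> ring
      _ = _ := by
          rw [prod_mul_distrib, prod_ite, prod_const, prod_const_one, mul_one,
            card_filter_card_filter_lt_lt _ (by omega)]
  unfold majorantOfSet
  rw [sdiff_insert, prod_insert hmI, hfactors, ← mul_prod_erase S _ hm,
    if_neg (by rw [habove_m]; omega)]
  ring

theorem strictMonoOn_Iic_succ {ℓ : ℕ → ℕ} {n : ℕ} (hℓ : StrictMonoOn ℓ (Set.Iic n))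
    (hn : ℓ n < ℓ (n + 1)) : StrictMonoOn ℓ (Set.Iic (n + 1)) := by
  refine strictMonoOn_Iic_of_lt_succ fun i hi => ?_
  rw [Order.succ_eq_add_one]
  obtain hi | rfl := Nat.lt_succ_iff_lt_or_eq.1 hi
  · exact hℓ (Set.mem_Iic.2 hi.le) (Set.mem_Iic.2 hi) (lt_add_one i)
  · exact hn

def insertAt (ℓ : ℕ → ℕ) (p m : ℕ) (i : ℕ) : ℕ :=
  if i < p then ℓ i else if i = p then m else ℓ (i - 1)

section InsertAt

variable {ℓ : ℕ → ℕ} {p m i : ℕ}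

theorem insertAt_of_lt (h : i < p) : insertAt ℓ p m i = ℓ i := if_pos h

theorem insertAt_self : insertAt ℓ p m p = m := by simp [insertAt]

theorem insertAt_of_gt (h : p < i) : insertAt ℓ p m i = ℓ (i - 1) := by
  simp [insertAt, h.not_gt, h.ne']

theorem image_Icc_insertAt {a n : ℕ} (hap : a ≤ p) (hpn : p ≤ n + 1) :
    (Icc a (n + 1)).image (insertAt ℓ p m) = insert m ((Icc a n).image ℓ) := by
  ext x
  simp only [mem_image, mem_insert, mem_Icc]
  constructor
  · rintro ⟨i, hi, rfl⟩
    obtain h | rfl | h := lt_trichotomy i p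
    · exact Or.inr ⟨i, ⟨hi.1, by omega⟩, (insertAt_of_lt h).symm⟩
    · exact Or.inl insertAt_self
    · exact Or.inr ⟨i - 1, ⟨by omega, by omega⟩, (insertAt_of_gt h).symm⟩
  · rintro (rfl | ⟨i, hi, rfl⟩)
    · exact ⟨p, ⟨hap, hpn⟩, insertAt_self⟩
    · by_cases h : i < p
      · exact ⟨i, ⟨hi.1, by omega⟩, insertAt_of_lt h⟩
      · exact ⟨i + 1, ⟨by omega, by omega⟩, insertAt_of_gt (by omega)⟩

theorem strictMonoOn_insertAt {n : ℕ} (hℓ : StrictMonoOn ℓ (Set.Iic n)) (hpn : p ≤ n)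
    (hlo : ℓ (p - 1) < m) (hhi : m < ℓ p) : StrictMonoOn (insertAt ℓ p m) (Set.Iic (n + 1)) := by
  have hstep : ∀ i < n, ℓ i < ℓ (i + 1) := fun i hi =>
    hℓ (Set.mem_Iic.2 hi.le) (Set.mem_Iic.2 hi) (lt_add_one i)
  refine strictMonoOn_Iic_of_lt_succ fun i hi => ?_
  rw [Order.succ_eq_add_one]
  obtain h | rfl | h := lt_trichotomy (i + 1) p
  · rw [insertAt_of_lt h, insertAt_of_lt ((lt_add_one i).trans h)]
    exact hstep i (by omega)
  · rwa [insertAt_self, insertAt_of_lt (lt_add_one i)]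
  · obtain rfl | h := (Nat.lt_succ_iff.1 h).eq_or_lt
    · rwa [insertAt_self, insertAt_of_gt (lt_add_one _)]
    · rw [insertAt_of_gt h, insertAt_of_gt (h.trans (lt_add_one i)), Nat.add_sub_cancel]
      simpa [Nat.sub_add_cancel (Nat.one_le_of_lt h)] using hstep (i - 1) (by omega)

end InsertAt

theorem eq_self_of_forall_lt_succ {ℓ : ℕ → ℕ} (h0 : ℓ 0 = 0) {j : ℕ}
    (h : ∀ i < j, ℓ (i + 1) = ℓ i + 1) : ℓ j = j := by
  induction j with
  | zero => exact h0
  | succ n ih => rw [h n n.lt_succ_self, ih fun i hi => h i (hi.trans n.lt_succ_self)]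

noncomputable def firstGap (ℓ : ℕ → ℕ) : ℕ := sInf {j | ℓ (j + 1) ≠ ℓ j + 1}

theorem apply_eq_self_of_le_firstGap {ℓ : ℕ → ℕ} (h0 : ℓ 0 = 0) {j : ℕ}
    (hj : j ≤ firstGap ℓ) : ℓ j = j :=
  eq_self_of_forall_lt_succ h0 fun _ hi => not_not.1 (Nat.notMem_of_lt_sInf (hi.trans_le hj))

theorem firstGap_lt {ℓ : ℕ → ℕ} (h0 : ℓ 0 = 0) {n : ℕ} (hn : ℓ n ≠ n) : firstGap ℓ < n :=
  lt_of_not_ge fun h => hn (apply_eq_self_of_le_firstGap h0 h)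

theorem apply_firstGap_succ_ne {ℓ : ℕ → ℕ} (h0 : ℓ 0 = 0) {n : ℕ} (hn : ℓ n ≠ n) :
    ℓ (firstGap ℓ + 1) ≠ ℓ (firstGap ℓ) + 1 := by
  refine Nat.sInf_mem (s := {j | ℓ (j + 1) ≠ ℓ j + 1}) ?_
  by_contra hempty
  exact hn (eq_self_of_forall_lt_succ h0 fun i _ => not_not.1 fun hi => hempty ⟨i, hi⟩)

theorem card_Icc_sdiff_image {ℓ : ℕ → ℕ} {d s : ℕ} (h0 : ℓ 0 = 0)
    (hℓ : StrictMonoOn ℓ (Set.Iic s)) (hd : ℓ s ≤ d) :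
    #(Icc 1 d \ (Icc 1 s).image ℓ) = d - s := by
  have hsub : (Icc 1 s).image ℓ ⊆ Icc 1 d := by
    intro x hx
    obtain ⟨i, hi, rfl⟩ := mem_image.1 hx
    rw [mem_Icc] at hi ⊢
    have hpos : ℓ 0 < ℓ i := hℓ (Set.mem_Iic.2 (Nat.zero_le s)) (Set.mem_Iic.2 hi.2) hi.1
    have hle : ℓ i ≤ ℓ s := hℓ.monotoneOn (Set.mem_Iic.2 hi.2) (Set.mem_Iic.2 le_rfl) hi.2
    omega
  have hinj : Set.InjOn ℓ (Icc 1 s) :=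
    hℓ.injOn.mono fun i hi => Set.mem_Iic.2 (mem_Icc.1 hi).2
  rw [card_sdiff_of_subset hsub, card_image_of_injOn hinj, Nat.card_Icc, Nat.card_Icc]
  omega

theorem notMem_image_Icc {ℓ : ℕ → ℕ} {s p : ℕ} (hid : ∀ j < p, ℓ j = j) (hp : p < ℓ p)
    (hℓ : MonotoneOn ℓ (Set.Iic s)) : p ∉ (Icc 1 s).image ℓ := by
  rintro hx
  obtain ⟨i, hi, hip⟩ := mem_image.1 hx
  rw [mem_Icc] at hi
  rcases lt_or_ge i p with h | h
  · rw [hid i h] at hip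
    omega
  · have := hℓ (Set.mem_Iic.2 (h.trans hi.2)) (Set.mem_Iic.2 hi.2) h
    omega

theorem le_of_mem_Icc_sdiff_image {ℓ : ℕ → ℕ} {d s p t : ℕ} (hid : ∀ j < p, ℓ j = j)
    (hps : p ≤ s + 1) (ht : t ∈ Icc 1 d \ (Icc 1 s).image ℓ) : p ≤ t := by
  obtain ⟨ht, htI⟩ := mem_sdiff.1 ht
  by_contra! htp
  exact htI (mem_image.2 ⟨t, mem_Icc.2 ⟨(mem_Icc.1 ht).1, by omega⟩, hid t htp⟩)

theorem stmt_18_general (d k s : ℕ) (hk1 : 1 ≤ k) (hk2 : k ≤ d - 1)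
    (hs : s ≤ k - 1) (q : ℝ)
    (ℓ : ℕ → ℕ) (h0 : ℓ 0 = 0)
    (hmono : ∀ i j : ℕ, i < j → j ≤ s → ℓ i < ℓ j)
    (hled : ℓ s ≤ d) (htop : ℓ (s + 1) = d + 1)
    (e : ℕ → ℝ) :
    ∃ ℓ' : ℕ → ℕ,
      ℓ' 0 = 0 ∧
      (∀ i j : ℕ, i < j → j ≤ s + 1 → ℓ' i < ℓ' j) ∧
      ℓ' (s + 1) ≤ d ∧
      (Finset.Icc 1 (s + 1)).image ℓ'
        = insert (ℓ (sInf {j : ℕ | ℓ (j + 1) ≠ ℓ j + 1}) + 1) ((Finset.Icc 1 s).image ℓ) ∧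
      Umaj q d k s ℓ e * q ^ (d - k) = Umaj q d k (s + 1) ℓ' e := by
  have hℓ : StrictMonoOn ℓ (Set.Iic s) := fun i _ j hj hij => hmono i j hij hj
  have hℓ' : StrictMonoOn ℓ (Set.Iic (s + 1)) := strictMonoOn_Iic_succ hℓ (by omega)
  obtain ⟨j₀, hj₀def⟩ : ∃ j, firstGap ℓ = j := ⟨_, rfl⟩
  have hj₀ : j₀ < s + 1 := hj₀def ▸ firstGap_lt h0 (by omega)
  have hid : ∀ j < j₀ + 1, ℓ j = j := fun j hj => apply_eq_self_of_le_firstGap h0 (by omega)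
  have hgap : j₀ + 1 < ℓ (j₀ + 1) := by
    have hne := hj₀def ▸ apply_firstGap_succ_ne h0 (n := s + 1) (by omega)
    have hlt : ℓ j₀ < ℓ (j₀ + 1) :=
      hℓ' (Set.mem_Iic.2 (by omega)) (Set.mem_Iic.2 hj₀) (lt_add_one j₀)
    rw [hid j₀ (lt_add_one j₀)] at hne hlt
    omega
  set ℓ' := insertAt ℓ (j₀ + 1) (j₀ + 1)
  have hℓ'mono : StrictMonoOn ℓ' (Set.Iic (s + 2)) := by
    refine strictMonoOn_insertAt hℓ' hj₀ ?_ hgap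
    rw [Nat.add_sub_cancel, hid j₀ (lt_add_one j₀)]
    exact lt_add_one j₀
  have hℓ'0 : ℓ' 0 = 0 := (insertAt_of_lt j₀.succ_pos).trans h0
  have himage : (Icc 1 (s + 1)).image ℓ' = insert (j₀ + 1) ((Icc 1 s).image ℓ) :=
    image_Icc_insertAt (Nat.le_add_left 1 j₀) hj₀
  refine ⟨ℓ', hℓ'0, fun i j hij hj => hℓ'mono (by simp; omega) (by simp; omega) hij, ?_, ?_, ?_⟩
  · have hlast : ℓ' (s + 2) = d + 1 := (insertAt_of_gt (by omega)).trans htop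
    have := hℓ'mono (Set.mem_Iic.2 (by omega)) (Set.mem_Iic.2 le_rfl) (lt_add_one (s + 1))
    omega
  · show _ = insert (ℓ (firstGap ℓ) + 1) _
    rw [himage, hj₀def, hid j₀ (lt_add_one j₀)]
  · rw [Umaj_eq_majorantOfSet e h0 hℓ, Umaj_eq_majorantOfSet e hℓ'0 (hℓ'mono.mono (by simp)),
      himage]
    refine majorantOfSet_insert_min e ?_ (fun t ht => le_of_mem_Icc_sdiff_image hid hj₀ ht) ?_
    · exact mem_sdiff.2 ⟨mem_Icc.2 ⟨by omega, by omega⟩, notMem_image_Icc hid hgap hℓ.monotoneOn⟩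
    · rw [card_Icc_sdiff_image h0 hℓ hled]
      omega

theorem stmt_18 (d k s : ℕ) (hd : 2 ≤ d) (hk1 : 1 ≤ k) (hk2 : k ≤ d - 1)
    (hs : s ≤ k - 1) (q : ℝ) (hq : 1 < q)
    (ℓ : ℕ → ℕ) (h0 : ℓ 0 = 0)
    (hmono : ∀ i j : ℕ, i < j → j ≤ s → ℓ i < ℓ j)
    (hled : ℓ s ≤ d) (htop : ℓ (s + 1) = d + 1)
    (e : ℕ → ℝ) (he0 : ∀ j, 0 ≤ e j) :
    ∃ ℓ' : ℕ → ℕ,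
      ℓ' 0 = 0 ∧
      (∀ i j : ℕ, i < j → j ≤ s + 1 → ℓ' i < ℓ' j) ∧
      ℓ' (s + 1) ≤ d ∧
      (Finset.Icc 1 (s + 1)).image ℓ'
        = insert (ℓ (sInf {j : ℕ | ℓ (j + 1) ≠ ℓ j + 1}) + 1) ((Finset.Icc 1 s).image ℓ) ∧
      Umaj q d k s ℓ e * q ^ (d - k) = Umaj q d k (s + 1) ℓ' e :=
  stmt_18_general d k s hk1 hk2 hs q ℓ h0 hmono hled htop e
end
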